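/- Let H be a real Hilbert space, N ≥ 1, and T_1, …, T_N : H → H nonexpansive maps with S := ⋂_{i=1}^N Fix(T_i) ≠ ∅, satisfying the Bauschke condition: for every k ∈ {0, …, N−1}, S = Fix(T_{[N+k]} ∘ ⋯ ∘ T_{[1+k]}), where [m] denotes the unique index in {1,…,N} congruent to m modulo N. Let κ, η > 0 and F : H → H with ‖F(x) − F(y)‖ ≤ κ‖x − y‖ and ⟨F(x) − F(y), x − y⟩ ≥ η‖x − y‖² for all x, y ∈ H. Fix μ ∈ (0, 2η/κ²) and a sequence (λ_n) ⊆ (0,1] with λ_n → 0, Σ_{n=1}^∞ λ_n = ∞ and Σ_{n=1}^∞ |λ_n − λ_{n+N}| < ∞. Then for any u₀ ∈ H, the sequence defined by u_{n+1} := T_{[n+1]}(u_n) − λ_{n+1}·μ·F(T_{[n+1]}(u_n)) converges strongly to the unique point u* ∈ S satisfying ⟨v − u*, F(u*)⟩ ≥ 0 for all v ∈ S; in particular such a point u* exists and is unique. -/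

import Mathlib

open scoped RealInnerProductSpace

/-- `cyc N m` is the unique index in `{1, …, N}` congruent to `m` modulo `N`. -/
def cyc (N m : ℕ) : ℕ := if m % N = 0 then N else m % N

/-- `cycComp T N k` is the composition `T [N+k] ∘ ⋯ ∘ T [1+k]`
(apply `T [1+k]` first, then `T [2+k]`, …, finally `T [N+k]`). -/
def cycComp {H : Type*} (T : ℕ → H → H) (N k : ℕ) (x : H) : H :=
  (List.range N).foldl (fun y j => T (cyc N (j + 1 + k)) y) x

/-!
The hybrid steepest descent step `x ↦ T x - λ μ F (T x)` is a `(1 - λ τ)`-contraction, so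
the iterates stay bounded, and since `∑ |λ n - λ (n + N)| < ∞`, Xu's lemma gives
`‖u (n + N) - u n‖ → 0`. Hence `u n` is asymptotically fixed by the block composition
`T [n+N] ∘ ⋯ ∘ T [n+1]`. Along any ultrafilter the bounded sequence `u` has a weak limit,
which by demiclosedness and Bauschke's condition lies in `S`; the variational inequality then
gives `limsup ⟪u* - u n, F u*⟫ ≤ 0`, and a second application of Xu's lemma to `‖u n - u*‖²`
yields strong convergence. The point `u*` is the fixed point of the contraction
`P_S (I - μ F)`, and strong monotonicity makes it unique.
-/

open Filter Topology Finset Function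

section RealSequences

variable {γ : ℕ → ℝ}

theorem tendsto_prod_Ico_one_sub_zero (hγ1 : ∀ n, γ n ≤ 1)
    (hγ : Tendsto (fun n => ∑ i ∈ range n, γ i) atTop atTop) (m : ℕ) :
    Tendsto (fun n => ∏ i ∈ Ico m n, (1 - γ i)) atTop (𝓝 0) := by
  have hexp : Tendsto (fun n => Real.exp (-∑ i ∈ Ico m n, γ i)) atTop (𝓝 0) := by
    have hsum : Tendsto (fun n => ∑ i ∈ Ico m n, γ i) atTop atTop := by
      refine (tendsto_atTop_add_const_right _ (-∑ i ∈ range m, γ i) hγ).congr' ?_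
      filter_upwards [eventually_ge_atTop m] with n hn
      rw [sum_Ico_eq_sub _ hn, sub_eq_add_neg]
    exact Real.tendsto_exp_atBot.comp (tendsto_neg_atTop_atBot.comp hsum)
  refine squeeze_zero (fun n => prod_nonneg fun i _ => sub_nonneg.2 (hγ1 i)) (fun n => ?_) hexp
  rw [← sum_neg_distrib, Real.exp_sum]
  exact prod_le_prod (fun i _ => sub_nonneg.2 (hγ1 i))
    fun i _ => by linarith [Real.add_one_le_exp (-γ i)]

theorem le_prod_mul_add_sum {b c : ℕ → ℝ} {m : ℕ} (hγ0 : ∀ n, 0 ≤ γ n) (hγ1 : ∀ n, γ n ≤ 1)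
    (hc : ∀ n, 0 ≤ c n)
    (h : ∀ n ≥ m, b (n + 1) ≤ (1 - γ n) * b n + c n) :
    ∀ n ≥ m, b n ≤ (∏ i ∈ Ico m n, (1 - γ i)) * b m + ∑ i ∈ Ico m n, c i := by
  intro n hn
  induction n, hn using Nat.le_induction with
  | base => simp
  | succ n hmn ih =>
    rw [prod_Ico_succ_top hmn, sum_Ico_succ_top hmn]
    have hC : 0 ≤ ∑ i ∈ Ico m n, c i := sum_nonneg fun i _ => hc i
    nlinarith [h n hmn, mul_le_mul_of_nonneg_left ih (sub_nonneg.2 (hγ1 n)), mul_nonneg (hγ0 n) hC]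

/-- Xu's lemma. -/
theorem tendsto_zero_of_le_one_sub_mul_add {a δ c : ℕ → ℝ} (ha : ∀ n, 0 ≤ a n)
    (hγ0 : ∀ n, 0 ≤ γ n) (hγ1 : ∀ n, γ n ≤ 1)
    (hγ : Tendsto (fun n => ∑ i ∈ range n, γ i) atTop atTop)
    (hδ : ∀ ε > 0, ∀ᶠ n in atTop, δ n ≤ ε) (hc0 : ∀ n, 0 ≤ c n) (hc : Summable c)
    (h : ∀ n, a (n + 1) ≤ (1 - γ n) * a n + γ n * δ n + c n) :
    Tendsto a atTop (𝓝 0) := by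
  refine tendsto_order.2 ⟨fun b hb => .of_forall fun n => hb.trans_le (ha n), fun ε hε => ?_⟩
  have hε3 : 0 < ε / 3 := by positivity
  obtain ⟨m₁, hm₁⟩ := (hδ _ hε3).exists_forall_of_atTop
  obtain ⟨m₂, hm₂⟩ := (((hc.hasSum.tendsto_sum_nat).const_sub (∑' i, c i)).eventually
    (gt_mem_nhds (by rwa [sub_self]))).exists_forall_of_atTop
  set m := max m₁ m₂
  -- `a n - ε / 3` satisfies the recursion without the `δ` term from `m` on
  have hbound := le_prod_mul_add_sum (b := fun n => a n - ε / 3) (m := m) hγ0 hγ1 hc0 fun n hn => by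
    nlinarith [h n, hm₁ n (le_of_max_le_left hn), hγ0 n]
  have htail : ∀ n, ∑ i ∈ Ico m n, c i < ε / 3 := fun n => by
    rcases le_total m n with hmn | hnm
    · rw [sum_Ico_eq_sub _ hmn]
      linarith [sum_le_hasSum (range n) (fun i _ => hc0 i) hc.hasSum, hm₂ m (le_max_right _ _)]
    · simpa [Ico_eq_empty_of_le hnm] using hε3
  have hprod := ((tendsto_prod_Ico_one_sub_zero hγ1 hγ m).mul_const (a m - ε / 3)).eventually
    (gt_mem_nhds (by rwa [zero_mul]))
  filter_upwards [hprod, eventually_ge_atTop m] with n hn hmn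
  linarith [hbound n hmn, htail n]

theorem le_max_of_le_one_sub_mul_add {a : ℕ → ℝ} {K : ℝ} (hγ0 : ∀ n, 0 ≤ γ n)
    (hγ1 : ∀ n, γ n ≤ 1) (h : ∀ n, a (n + 1) ≤ (1 - γ n) * a n + γ n * K) :
    ∀ n, a n ≤ max (a 0) K := by
  intro n
  induction n with
  | zero => exact le_max_left _ _
  | succ n ih =>
    nlinarith [h n, mul_le_mul_of_nonneg_left ih (sub_nonneg.2 (hγ1 n)),
      mul_le_mul_of_nonneg_left (le_max_right (a 0) K) (hγ0 n)]

end RealSequences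

section BlockComposition

variable {E : Type*}

/-- `blockComp g N k = g (N + k) ∘ ⋯ ∘ g (1 + k)`, so that `cycComp T N k` is
`blockComp (fun m => T (cyc N m)) N k`. -/
def blockComp (g : ℕ → E → E) (N k : ℕ) (x : E) : E :=
  (List.range N).foldl (fun y j => g (j + 1 + k) y) x

theorem blockComp_succ (g : ℕ → E → E) (N k : ℕ) (x : E) :
    blockComp g (N + 1) k x = g (N + 1 + k) (blockComp g N k x) := by
  simp only [blockComp, List.range_succ, List.foldl_append, List.foldl_cons, List.foldl_nil]

theorem blockComp_mod {g : ℕ → E → E} {N : ℕ} (hg : Periodic g N) (j k : ℕ) :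
    blockComp g j (k % N) = blockComp g j k := by
  have h : ∀ i, g (i + 1 + k % N) = g (i + 1 + k) := fun i => by
    rw [← hg.map_mod_nat, Nat.add_mod_mod, hg.map_mod_nat]
  funext x
  simp only [blockComp, h]

variable [SeminormedAddCommGroup E] {g : ℕ → E → E}

theorem norm_blockComp_sub_le (hg : ∀ m x y, ‖g m x - g m y‖ ≤ ‖x - y‖) (N k : ℕ) (x y : E) :
    ‖blockComp g N k x - blockComp g N k y‖ ≤ ‖x - y‖ := by
  induction N with
  | zero => exact le_rfl
  | succ N ih => simpa only [blockComp_succ] using (hg _ _ _).trans ih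

theorem norm_sub_blockComp_le_sum (hg : ∀ m x y, ‖g m x - g m y‖ ≤ ‖x - y‖) (v : ℕ → E)
    (N k : ℕ) :
    ‖v (k + N) - blockComp g N k (v k)‖ ≤
      ∑ i ∈ range N, ‖v (k + i + 1) - g (k + i + 1) (v (k + i))‖ := by
  induction N with
  | zero => simp [blockComp]
  | succ N ih =>
    rw [blockComp_succ, sum_range_succ, show N + 1 + k = k + N + 1 by omega, ← add_assoc]
    calc _ ≤ ‖v (k + N + 1) - g (k + N + 1) (v (k + N))‖ +
          ‖g (k + N + 1) (v (k + N)) - g (k + N + 1) (blockComp g N k (v k))‖ :=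
          norm_sub_le_norm_sub_add_norm_sub _ _ _
      _ ≤ _ := by linarith [hg (k + N + 1) (v (k + N)) (blockComp g N k (v k))]

end BlockComposition

section Hilbert

variable {H : Type*} [NormedAddCommGroup H] [InnerProductSpace ℝ H]

theorem norm_smul_add_smul_sq (u v : H) {a b : ℝ} (hab : a + b = 1) :
    ‖a • u + b • v‖ ^ 2 = a * ‖u‖ ^ 2 + b * ‖v‖ ^ 2 - a * b * ‖u - v‖ ^ 2 := by
  rw [norm_add_sq_real, norm_sub_sq_real, norm_smul, norm_smul, real_inner_smul_left,
    real_inner_smul_right, mul_pow, mul_pow, Real.norm_eq_abs, Real.norm_eq_abs, sq_abs, sq_abs]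
  obtain rfl := eq_sub_of_add_eq hab
  ring

theorem convex_fixedPoints {T : H → H} (hT : ∀ x y, ‖T x - T y‖ ≤ ‖x - y‖) :
    Convex ℝ (fixedPoints T) := by
  intro x hx y hy a b ha hb hab
  set z := a • x + b • y
  have key : ∀ w, ‖w - z‖ ^ 2 = a * ‖w - x‖ ^ 2 + b * ‖w - y‖ ^ 2 - a * b * ‖y - x‖ ^ 2 :=
    fun w => by
      rw [← sub_sub_sub_cancel_left x y w, ← norm_smul_add_smul_sq _ _ hab]
      congr 2
      rw [smul_sub, smul_sub, sub_add_sub_comm, ← add_smul, hab, one_smul]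
  have hTz : ∀ v, IsFixedPt T v → ‖T z - v‖ ^ 2 ≤ ‖z - v‖ ^ 2 := fun v hv => by
    conv_lhs => rw [← hv.eq]
    exact pow_le_pow_left₀ (norm_nonneg _) (hT z v) 2
  -- `key` at `T z` and at `z`: moving `z` to `T z` does not increase the right-hand side
  have h0 : ‖T z - z‖ ^ 2 ≤ 0 := by
    have hzz := key z
    rw [sub_self, norm_zero] at hzz
    nlinarith [key (T z), hTz x hx, hTz y hy]
  exact (by simpa [sub_eq_zero] using h0 : T z = z)

theorem norm_sub_smul_sub_sub_smul_le {F : H → H} {κ η μ τ l : ℝ}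
    (hFlip : ∀ x y, ‖F x - F y‖ ≤ κ * ‖x - y‖)
    (hFmon : ∀ x y, η * ‖x - y‖ ^ 2 ≤ ⟪F x - F y, x - y⟫)
    (hμ : 0 ≤ μ) (hτ : 2 * τ ≤ μ * (2 * η - μ * κ ^ 2)) (hτ1 : τ ≤ 1)
    (hl0 : 0 ≤ l) (hl1 : l ≤ 1) (x y : H) :
    ‖(x - (l * μ) • F x) - (y - (l * μ) • F y)‖ ≤ (1 - l * τ) * ‖x - y‖ := by
  have ht : 0 ≤ l * μ := mul_nonneg hl0 hμ
  have hlτ : l * τ ≤ 1 := by nlinarith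
  have hF2 : ‖F x - F y‖ ^ 2 ≤ κ ^ 2 * ‖x - y‖ ^ 2 := by
    rw [← mul_pow]; exact pow_le_pow_left₀ (norm_nonneg _) (hFlip x y) 2
  -- `‖·‖² ≤ (1 - 2 l μ η + l² μ² κ²) ‖x - y‖²` and `l² ≤ l` bring the factor down to `1 - 2 l τ`
  have hsq : ‖(x - y) - (l * μ) • (F x - F y)‖ ^ 2 ≤ (1 - 2 * (l * τ)) * ‖x - y‖ ^ 2 := by
    rw [norm_sub_sq_real, real_inner_smul_right, norm_smul, Real.norm_of_nonneg ht,
      real_inner_comm]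
    have hD := sq_nonneg ‖x - y‖
    have hl2 : l ^ 2 ≤ l := by nlinarith
    nlinarith [mul_le_mul_of_nonneg_left (hFmon x y) ht,
      mul_le_mul_of_nonneg_left hF2 (sq_nonneg (l * μ)),
      mul_le_mul_of_nonneg_right hl2 (mul_nonneg (sq_nonneg μ) (mul_nonneg (sq_nonneg κ) hD)),
      mul_le_mul_of_nonneg_left hτ (mul_nonneg hl0 hD)]
  rw [show (x - (l * μ) • F x) - (y - (l * μ) • F y) = (x - y) - (l * μ) • (F x - F y) by
    rw [smul_sub]; abel]
  refine le_of_pow_le_pow_left₀ two_ne_zero (by nlinarith [norm_nonneg (x - y)]) ?_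
  nlinarith [sq_nonneg (l * τ), sq_nonneg ‖x - y‖]

theorem norm_sub_le_of_forall_inner_sub_le_zero {S : Set H} {P : H → H}
    (hP : ∀ x, P x ∈ S ∧ ∀ w ∈ S, ⟪x - P x, w - P x⟫ ≤ 0) (x y : H) :
    ‖P x - P y‖ ≤ ‖x - y‖ := by
  have h := add_nonpos ((hP x).2 _ (hP y).1) ((hP y).2 _ (hP x).1)
  have e : ⟪x - P x, P y - P x⟫ + ⟪y - P y, P x - P y⟫ = ‖P x - P y‖ ^ 2 - ⟪x - y, P x - P y⟫ := by
    rw [← real_inner_self_eq_norm_sq]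
    simp only [inner_sub_left, inner_sub_right, real_inner_comm]
    ring
  nlinarith [real_inner_le_norm (x - y) (P x - P y), norm_nonneg (P x - P y), norm_nonneg (x - y)]

theorem eq_of_forall_inner_nonneg {S : Set H} {F : H → H} {η : ℝ} (hη : 0 < η)
    (hFmon : ∀ x y, η * ‖x - y‖ ^ 2 ≤ ⟪F x - F y, x - y⟫) {p w : H} (hp : p ∈ S)
    (hpS : ∀ v ∈ S, 0 ≤ ⟪v - p, F p⟫) (hw : w ∈ S) (hwS : ∀ v ∈ S, 0 ≤ ⟪v - w, F w⟫) :
    w = p := by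
  have e : ⟪F w - F p, w - p⟫ = -⟪p - w, F w⟫ - ⟪w - p, F p⟫ := by
    simp only [inner_sub_left, inner_sub_right, real_inner_comm]
    ring
  have h : η * ‖w - p‖ ^ 2 ≤ 0 := by linarith [hFmon w p, hpS w hw, hwS p hp]
  simpa [sub_eq_zero] using nonpos_of_mul_nonpos_right h hη

variable [CompleteSpace H]

theorem exists_forall_inner_sub_le_zero {S : Set H} (hSc : IsClosed S) (hSconv : Convex ℝ S)
    (hSne : S.Nonempty) : ∃ P : H → H, ∀ x, P x ∈ S ∧ ∀ w ∈ S, ⟪x - P x, w - P x⟫ ≤ 0 := by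
  choose P hPS hP using fun x =>
    exists_norm_eq_iInf_of_complete_convex hSne hSc.isComplete hSconv x
  exact ⟨P, fun x => ⟨hPS x, (norm_eq_iInf_iff_real_inner_le_zero hSconv (hPS x)).1 (hP x)⟩⟩

/-- The variational inequality over `S` is the fixed point equation `p = P_S (p - μ F p)`,
a contraction when `I - μ F` is one. -/
theorem exists_forall_inner_nonneg_of_contraction {S : Set H} (hSc : IsClosed S)
    (hSconv : Convex ℝ S) (hSne : S.Nonempty) {F : H → H} {μ q : ℝ} (hμ : 0 < μ) (hq : q < 1)
    (hF : ∀ x y, ‖(x - μ • F x) - (y - μ • F y)‖ ≤ q * ‖x - y‖) :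
    ∃ p ∈ S, ∀ v ∈ S, 0 ≤ ⟪v - p, F p⟫ := by
  obtain ⟨P, hP⟩ := exists_forall_inner_sub_le_zero hSc hSconv hSne
  have hΦ : ContractingWith q.toNNReal fun x => P (x - μ • F x) := by
    refine ⟨Real.toNNReal_lt_one.2 hq, LipschitzWith.of_dist_le' fun x y => ?_⟩
    simpa only [dist_eq_norm] using
      (norm_sub_le_of_forall_inner_sub_le_zero hP _ _).trans (hF x y)
  set p := ContractingWith.fixedPoint _ hΦ
  have hp : P (p - μ • F p) = p := ContractingWith.fixedPoint_isFixedPt hΦ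
  refine ⟨p, hp ▸ (hP _).1, fun v hv => ?_⟩
  have h := (hP (p - μ • F p)).2 v hv
  rw [hp, sub_sub_cancel_left, inner_neg_left, real_inner_smul_left, real_inner_comm] at h
  nlinarith

end Hilbert

section WeakLimits

variable {H : Type*} [NormedAddCommGroup H] [InnerProductSpace ℝ H] {ι : Type*} {u : ι → H} {C : ℝ}

/-- The limits of `⟪u i, y⟫` along `𝒰` form a bounded linear functional; its Riesz
representative is the weak limit. -/
theorem exists_forall_tendsto_inner [CompleteSpace H] (𝒰 : Ultrafilter ι)
    (hu : ∀ i, ‖u i‖ ≤ C) : ∃ z, ∀ y, Tendsto (fun i => ⟪u i, y⟫) 𝒰 (𝓝 ⟪z, y⟫) := by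
  have hball : ∀ y i, ⟪u i, y⟫ ∈ Metric.closedBall (0 : ℝ) (C * ‖y‖) := fun y i => by
    rw [mem_closedBall_zero_iff, Real.norm_eq_abs]
    exact (abs_real_inner_le_norm _ _).trans (mul_le_mul_of_nonneg_right (hu i) (norm_nonneg y))
  have hL : ∀ y, Tendsto (fun i => ⟪u i, y⟫) 𝒰
      (𝓝 (limUnder (𝒰 : Filter ι) fun i => ⟪u i, y⟫)) := fun y => by
    refine tendsto_nhds_limUnder ?_
    obtain ⟨L, -, hL⟩ := (isCompact_closedBall (0 : ℝ) (C * ‖y‖)).ultrafilter_le_nhds'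
      (𝒰.map fun i => ⟪u i, y⟫) (Ultrafilter.mem_map.2 (univ_mem' (hball y)))
    exact ⟨L, hL⟩
  let ℓ : H →ₗ[ℝ] ℝ :=
    { toFun := fun y => limUnder (𝒰 : Filter ι) fun i => ⟪u i, y⟫
      map_add' := fun y y' => tendsto_nhds_unique (hL (y + y')) <| by
        simpa only [inner_add_right] using (hL y).add (hL y')
      map_smul' := fun r y => tendsto_nhds_unique (hL (r • y)) <| by
        simpa only [real_inner_smul_right, RingHom.id_apply, smul_eq_mul] using
          (hL y).const_mul r }
  have hℓ : ∀ y, ‖ℓ y‖ ≤ C * ‖y‖ := fun y =>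
    mem_closedBall_zero_iff.1 <| Metric.isClosed_closedBall.mem_of_tendsto (hL y)
      (.of_forall (hball y))
  refine ⟨(InnerProductSpace.toDual ℝ H).symm (ℓ.mkContinuous C hℓ), fun y => ?_⟩
  rw [InnerProductSpace.toDual_symm_apply, LinearMap.mkContinuous_apply]
  exact hL y

/-- Demiclosedness of `I - V` at `0`. -/
theorem isFixedPt_of_tendsto_inner {l : Filter ι} [l.NeBot] {V : H → H}
    (hV : ∀ x y, ‖V x - V y‖ ≤ ‖x - y‖) (hu : ∀ i, ‖u i‖ ≤ C) {z : H}
    (hz : ∀ y, Tendsto (fun i => ⟪u i, y⟫) l (𝓝 ⟪z, y⟫))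
    (hVu : Tendsto (fun i => ‖u i - V (u i)‖) l (𝓝 0)) : IsFixedPt V z := by
  set B := C + ‖z‖
  have hw : Tendsto (fun i => ⟪u i - z, z - V z⟫) l (𝓝 0) := by
    simpa only [inner_sub_left, sub_self] using (hz (z - V z)).sub_const ⟪z, z - V z⟫
  -- expand `‖u - V z‖²` around `z` and compare with `‖u - V z‖ ≤ ‖u - V u‖ + ‖u - z‖`
  have hle : ∀ i, ‖z - V z‖ ^ 2 ≤
      ‖u i - V (u i)‖ ^ 2 + 2 * B * ‖u i - V (u i)‖ - 2 * ⟪u i - z, z - V z⟫ := fun i => by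
    have hexp : ‖u i - V z‖ ^ 2 = ‖u i - z‖ ^ 2 + 2 * ⟪u i - z, z - V z⟫ + ‖z - V z‖ ^ 2 := by
      rw [← norm_add_sq_real, sub_add_sub_cancel]
    have htri : ‖u i - V z‖ ≤ ‖u i - V (u i)‖ + ‖u i - z‖ :=
      (norm_sub_le_norm_sub_add_norm_sub _ (V (u i)) _).trans (add_le_add_right (hV _ _) _)
    have hB : ‖u i - z‖ ≤ B := (norm_sub_le _ _).trans (add_le_add_left (hu i) _)
    nlinarith [pow_le_pow_left₀ (norm_nonneg _) htri 2, norm_nonneg (u i - V (u i)),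
      mul_le_mul_of_nonneg_left hB (norm_nonneg (u i - V (u i))), norm_nonneg (u i - z)]
  have hlim : Tendsto (fun i => ‖u i - V (u i)‖ ^ 2 + 2 * B * ‖u i - V (u i)‖ -
      2 * ⟪u i - z, z - V z⟫) l (𝓝 0) := by
    simpa using ((hVu.pow 2).add (hVu.const_mul (2 * B))).sub (hw.const_mul 2)
  have h0 : ‖z - V z‖ ^ 2 ≤ 0 := ge_of_tendsto hlim (.of_forall hle)
  exact (by simpa [sub_eq_zero] using h0 : z = V z).symm

theorem eventually_inner_sub_le [CompleteSpace H] {l : Filter ι} (hu : ∀ i, ‖u i‖ ≤ C)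
    {S : Set H} (hS : ∀ 𝒰 : Ultrafilter ι, ↑𝒰 ≤ l → ∀ z,
      (∀ y, Tendsto (fun i => ⟪u i, y⟫) 𝒰 (𝓝 ⟪z, y⟫)) → z ∈ S)
    {p a : H} (hp : ∀ v ∈ S, 0 ≤ ⟪v - p, a⟫) {ε : ℝ} (hε : 0 < ε) :
    ∀ᶠ i in l, ⟪p - u i, a⟫ ≤ ε := by
  refine mem_iff_ultrafilter.2 fun 𝒰 h𝒰 => ?_
  obtain ⟨z, hz⟩ := exists_forall_tendsto_inner 𝒰 hu
  have hlim : Tendsto (fun i => ⟪p - u i, a⟫) 𝒰 (𝓝 (-⟪z - p, a⟫)) := by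
    simpa only [inner_sub_left, neg_sub] using (hz a).const_sub ⟪p, a⟫
  exact (hlim.eventually_lt_const (by linarith [hp z (hS 𝒰 h𝒰 z hz)])).mono fun _ => le_of_lt

end WeakLimits

theorem Ultrafilter.exists_setOf_mod_eq_mem (𝒰 : Ultrafilter ℕ) {N : ℕ} (hN : 0 < N) :
    ∃ k < N, {n | n % N = k} ∈ 𝒰 := by
  have h : (⋃ k ∈ Set.Iio N, {n | n % N = k}) ∈ 𝒰 :=
    univ_mem' fun n => Set.mem_biUnion (Set.mem_Iio.2 (Nat.mod_lt n hN)) rfl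
  simpa using (Ultrafilter.finite_biUnion_mem_iff (Set.finite_Iio N)).1 h

theorem mul_mem_Icc_of_mem_Ioc {a b : ℝ} (ha : a ∈ Set.Ioc 0 1) (hb : b ∈ Set.Ioc 0 1) :
    a * b ∈ Set.Icc 0 1 :=
  ⟨mul_nonneg ha.1.le hb.1.le, mul_le_one₀ ha.2 hb.1.le hb.2⟩

section HSDM

variable {H : Type*} [NormedAddCommGroup H] [InnerProductSpace ℝ H]
  {g : ℕ → H → H} {F : H → H} {N : ℕ} {μ τ : ℝ} {lam : ℕ → ℝ} {u : ℕ → H} {p : H}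

theorem tendsto_sum_range_mul_atTop (hdiv : Tendsto (fun n => ∑ i ∈ Icc 1 n, lam i) atTop atTop)
    (hτ : 0 < τ) : Tendsto (fun n => ∑ i ∈ range n, lam (i + 1) * τ) atTop atTop := by
  simp only [← sum_mul, range_eq_Ico, sum_Ico_add' lam 0 _ 1]
  exact hdiv.atTop_mul_const hτ

theorem norm_hsdm_sub_add_smul_le (hg : ∀ m x y, ‖g m x - g m y‖ ≤ ‖x - y‖)
    (hstep : ∀ n x y, ‖(x - (lam n * μ) • F x) - (y - (lam n * μ) • F y)‖ ≤
      (1 - lam n * τ) * ‖x - y‖)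
    (hrec : ∀ n, u (n + 1) = g (n + 1) (u n) - (lam (n + 1) * μ) • F (g (n + 1) (u n)))
    (hlam : ∀ n, lam n ∈ Set.Ioc 0 1) (hτ : τ ∈ Set.Ioc 0 1) (hgp : ∀ m, g m p = p) (n : ℕ) :
    ‖u (n + 1) - p + (lam (n + 1) * μ) • F p‖ ≤ (1 - lam (n + 1) * τ) * ‖u n - p‖ := by
  have e : u (n + 1) - p + (lam (n + 1) * μ) • F p =
      (g (n + 1) (u n) - (lam (n + 1) * μ) • F (g (n + 1) (u n))) -
        (g (n + 1) p - (lam (n + 1) * μ) • F (g (n + 1) p)) := by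
    rw [hrec, hgp]; abel
  rw [e]
  exact (hstep _ _ _).trans (mul_le_mul_of_nonneg_left (hg _ _ _)
    (sub_nonneg.2 (mul_mem_Icc_of_mem_Ioc (hlam _) hτ).2))

theorem hsdm_norm_sub_le (hg : ∀ m x y, ‖g m x - g m y‖ ≤ ‖x - y‖)
    (hstep : ∀ n x y, ‖(x - (lam n * μ) • F x) - (y - (lam n * μ) • F y)‖ ≤
      (1 - lam n * τ) * ‖x - y‖)
    (hrec : ∀ n, u (n + 1) = g (n + 1) (u n) - (lam (n + 1) * μ) • F (g (n + 1) (u n)))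
    (hlam : ∀ n, lam n ∈ Set.Ioc 0 1) (hτ : τ ∈ Set.Ioc 0 1) (hμ : 0 < μ)
    (hgp : ∀ m, g m p = p) (n : ℕ) :
    ‖u n - p‖ ≤ max ‖u 0 - p‖ (μ * ‖F p‖ / τ) := by
  refine le_max_of_le_one_sub_mul_add (a := fun n => ‖u n - p‖) (γ := fun n => lam (n + 1) * τ)
    (fun n => (mul_mem_Icc_of_mem_Ioc (hlam _) hτ).1)
    (fun n => (mul_mem_Icc_of_mem_Ioc (hlam _) hτ).2) (fun n => ?_) n
  have hFp : ‖(lam (n + 1) * μ) • F p‖ = lam (n + 1) * τ * (μ * ‖F p‖ / τ) := by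
    rw [norm_smul, Real.norm_of_nonneg (mul_nonneg (hlam _).1.le hμ.le)]
    field_simp [hτ.1.ne']
  calc ‖u (n + 1) - p‖
      ≤ ‖u (n + 1) - p + (lam (n + 1) * μ) • F p‖ + ‖(lam (n + 1) * μ) • F p‖ :=
        norm_le_add_norm_add _ _
    _ ≤ _ := by
        rw [hFp]
        gcongr
        exact norm_hsdm_sub_add_smul_le hg hstep hrec hlam hτ hgp n

theorem hsdm_tendsto_norm_add_sub (hg : ∀ m x y, ‖g m x - g m y‖ ≤ ‖x - y‖)
    (hgN : Periodic g N)
    (hstep : ∀ n x y, ‖(x - (lam n * μ) • F x) - (y - (lam n * μ) • F y)‖ ≤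
      (1 - lam n * τ) * ‖x - y‖)
    (hrec : ∀ n, u (n + 1) = g (n + 1) (u n) - (lam (n + 1) * μ) • F (g (n + 1) (u n)))
    (hlam : ∀ n, lam n ∈ Set.Ioc 0 1) (hτ : τ ∈ Set.Ioc 0 1) (hμ : 0 < μ)
    (hdiv : Tendsto (fun n => ∑ i ∈ Icc 1 n, lam i) atTop atTop)
    (hsum : Summable fun n => |lam n - lam (n + N)|) {M : ℝ}
    (hM : ∀ n, ‖F (g (n + 1) (u n))‖ ≤ M) :
    Tendsto (fun n => ‖u (n + N) - u n‖) atTop (𝓝 0) := by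
  have hγ := fun n => mul_mem_Icc_of_mem_Ioc (hlam (n + 1)) hτ
  have hc : Summable fun n => μ * M * |lam (n + 1 + N) - lam (n + 1)| :=
    (((summable_nat_add_iff 1).2 hsum).congr fun n => abs_sub_comm _ _).mul_left _
  refine tendsto_zero_of_le_one_sub_mul_add (δ := 0) (fun n => norm_nonneg _)
    (fun n => (hγ n).1) (fun n => (hγ n).2) (tendsto_sum_range_mul_atTop hdiv hτ.1)
    (fun ε hε => .of_forall fun _ => hε.le)
    (fun n => mul_nonneg (mul_nonneg hμ.le ((norm_nonneg _).trans (hM 0))) (abs_nonneg _)) hc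
    fun n => ?_
  -- by periodicity `u (· + N)` and `u` apply the same map `g (n + 1)`; only the step sizes differ
  have e : u (n + 1 + N) - u (n + 1) =
      ((g (n + 1) (u (n + N)) - (lam (n + 1) * μ) • F (g (n + 1) (u (n + N)))) -
        (g (n + 1) (u n) - (lam (n + 1) * μ) • F (g (n + 1) (u n)))) -
      ((lam (n + 1 + N) - lam (n + 1)) * μ) • F (g (n + 1) (u (n + N))) := by
    rw [show n + 1 + N = n + N + 1 by omega, hrec, hrec, show n + N + 1 = n + 1 + N by omega,
      hgN]
    module
  have hFM : ‖F (g (n + 1) (u (n + N)))‖ ≤ M := by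
    have h := hM (n + N)
    rwa [show n + N + 1 = n + 1 + N by omega, hgN] at h
  rw [Pi.zero_apply, mul_zero, add_zero, e]
  refine (norm_sub_le _ _).trans (add_le_add ((hstep _ _ _).trans
    (mul_le_mul_of_nonneg_left (hg _ _ _) (sub_nonneg.2 (hγ n).2))) ?_)
  rw [norm_smul, Real.norm_eq_abs, abs_mul, abs_of_pos hμ]
  nlinarith [mul_le_mul_of_nonneg_left hFM
    (mul_nonneg (abs_nonneg (lam (n + 1 + N) - lam (n + 1))) hμ.le)]

theorem hsdm_tendsto_norm_sub_blockComp (hg : ∀ m x y, ‖g m x - g m y‖ ≤ ‖x - y‖)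
    (hrec : ∀ n, u (n + 1) = g (n + 1) (u n) - (lam (n + 1) * μ) • F (g (n + 1) (u n)))
    (hlam : ∀ n, lam n ∈ Set.Ioc 0 1) (hlam0 : Tendsto lam atTop (𝓝 0)) (hμ : 0 < μ) {M : ℝ}
    (hM : ∀ n, ‖F (g (n + 1) (u n))‖ ≤ M)
    (hd : Tendsto (fun n => ‖u (n + N) - u n‖) atTop (𝓝 0)) :
    Tendsto (fun n => ‖u n - blockComp g N n (u n)‖) atTop (𝓝 0) := by
  have hstep : ∀ m, ‖u (m + 1) - g (m + 1) (u m)‖ ≤ lam (m + 1) * μ * M := fun m => by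
    rw [hrec, sub_sub_cancel_left, norm_neg, norm_smul,
      Real.norm_of_nonneg (mul_nonneg (hlam _).1.le hμ.le)]
    exact mul_le_mul_of_nonneg_left (hM m) (mul_nonneg (hlam _).1.le hμ.le)
  have hbound : ∀ n, ‖u n - blockComp g N n (u n)‖ ≤
      ‖u (n + N) - u n‖ + ∑ i ∈ range N, lam (n + i + 1) * μ * M := fun n =>
    (norm_sub_le_norm_sub_add_norm_sub _ (u (n + N)) _).trans <| by
      rw [norm_sub_rev]
      gcongr
      exact (norm_sub_blockComp_le_sum hg u N n).trans (sum_le_sum fun i _ => hstep (n + i))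
  have hlim : Tendsto (fun n => ∑ i ∈ range N, lam (n + i + 1) * μ * M) atTop (𝓝 0) := by
    simpa only [add_assoc, comp_apply, zero_mul, sum_const_zero] using
      tendsto_finsetSum (range N) fun i _ =>
        ((hlam0.comp (tendsto_add_atTop_nat (i + 1))).mul_const μ).mul_const M
  exact squeeze_zero (fun n => norm_nonneg _) hbound (by simpa using hd.add hlim)

theorem mem_of_tendsto_norm_sub_blockComp (hN : 0 < N)
    (hg : ∀ m x y, ‖g m x - g m y‖ ≤ ‖x - y‖) (hgN : Periodic g N) {S : Set H}
    (hS : ∀ k < N, ∀ z, blockComp g N k z = z → z ∈ S) {C : ℝ} (hC : ∀ n, ‖u n‖ ≤ C)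
    (hreg : Tendsto (fun n => ‖u n - blockComp g N n (u n)‖) atTop (𝓝 0))
    (𝒰 : Ultrafilter ℕ) (h𝒰 : (𝒰 : Filter ℕ) ≤ atTop) (z : H)
    (hz : ∀ y, Tendsto (fun n => ⟪u n, y⟫) 𝒰 (𝓝 ⟪z, y⟫)) : z ∈ S := by
  -- `𝒰` lives on one residue class `k`, where `blockComp g N n = blockComp g N k`
  obtain ⟨k, hk, hk𝒰⟩ := 𝒰.exists_setOf_mod_eq_mem hN
  refine hS k hk z (isFixedPt_of_tendsto_inner (norm_blockComp_sub_le hg N k) hC hz ?_)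
  refine (hreg.mono_left h𝒰).congr' ?_
  filter_upwards [hk𝒰] with n hn
  rw [← blockComp_mod hgN, hn]

theorem hsdm_tendsto_of_eventually_inner_le (hg : ∀ m x y, ‖g m x - g m y‖ ≤ ‖x - y‖)
    (hstep : ∀ n x y, ‖(x - (lam n * μ) • F x) - (y - (lam n * μ) • F y)‖ ≤
      (1 - lam n * τ) * ‖x - y‖)
    (hrec : ∀ n, u (n + 1) = g (n + 1) (u n) - (lam (n + 1) * μ) • F (g (n + 1) (u n)))
    (hlam : ∀ n, lam n ∈ Set.Ioc 0 1) (hτ : τ ∈ Set.Ioc 0 1) (hμ : 0 < μ)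
    (hgp : ∀ m, g m p = p) (hdiv : Tendsto (fun n => ∑ i ∈ Icc 1 n, lam i) atTop atTop)
    (hδ : ∀ ε > 0, ∀ᶠ n in atTop, ⟪p - u n, F p⟫ ≤ ε) :
    Tendsto u atTop (𝓝 p) := by
  have hγ := fun n => mul_mem_Icc_of_mem_Ioc (hlam (n + 1)) hτ
  have hτ0 : 0 < τ := hτ.1
  have hsq : Tendsto (fun n => ‖u n - p‖ ^ 2) atTop (𝓝 0) := by
    refine tendsto_zero_of_le_one_sub_mul_add (c := 0)
      (δ := fun n => 2 * μ / τ * ⟪p - u (n + 1), F p⟫) (fun n => sq_nonneg _)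
      (fun n => (hγ n).1) (fun n => (hγ n).2) (tendsto_sum_range_mul_atTop hdiv hτ0)
      (fun ε hε => ?_) (fun _ => le_rfl) summable_zero (fun n => ?_)
    · filter_upwards [(tendsto_add_atTop_nat 1).eventually
        (hδ (ε * τ / (2 * μ)) (by positivity))] with n hn
      calc 2 * μ / τ * ⟪p - u (n + 1), F p⟫ ≤ 2 * μ / τ * (ε * τ / (2 * μ)) := by
            gcongr
        _ = ε := by field_simp
    · -- `‖a‖² = ‖a + b‖² - 2⟪a, b⟫ - ‖b‖²` with `a = u (n + 1) - p`, `b = λ μ F p`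
      have h := pow_le_pow_left₀ (norm_nonneg _)
        (norm_hsdm_sub_add_smul_le hg hstep hrec hlam hτ hgp n) 2
      rw [norm_add_sq_real, real_inner_smul_right, mul_pow] at h
      have hinner : ⟪u (n + 1) - p, F p⟫ = -⟪p - u (n + 1), F p⟫ := by
        rw [← inner_neg_left, neg_sub]
      have hδn : lam (n + 1) * τ * (2 * μ / τ * ⟪p - u (n + 1), F p⟫) =
          2 * (lam (n + 1) * μ) * ⟪p - u (n + 1), F p⟫ := by
        field_simp
      rw [hδn, Pi.zero_apply, add_zero]
      have hcoef : (1 - lam (n + 1) * τ) ^ 2 * ‖u n - p‖ ^ 2 ≤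
          (1 - lam (n + 1) * τ) * ‖u n - p‖ ^ 2 :=
        mul_le_mul_of_nonneg_right (by nlinarith [(hγ n).1, (hγ n).2]) (sq_nonneg _)
      rw [hinner] at h
      linarith [sq_nonneg ‖(lam (n + 1) * μ) • F p‖]
  exact tendsto_iff_norm_sub_tendsto_zero.2 (by
    simpa only [Real.sqrt_sq (norm_nonneg _), Real.sqrt_zero] using hsq.sqrt)

theorem hsdm_tendsto [CompleteSpace H] (hN : 0 < N) (hg : ∀ m x y, ‖g m x - g m y‖ ≤ ‖x - y‖)
    (hgN : Periodic g N) (hgp : ∀ m, g m p = p) {S : Set H}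
    (hS : ∀ k < N, ∀ z, blockComp g N k z = z → z ∈ S) (hp : ∀ v ∈ S, 0 ≤ ⟪v - p, F p⟫)
    {κ : ℝ} (hκ : 0 ≤ κ) (hFlip : ∀ x y, ‖F x - F y‖ ≤ κ * ‖x - y‖)
    (hstep : ∀ n x y, ‖(x - (lam n * μ) • F x) - (y - (lam n * μ) • F y)‖ ≤
      (1 - lam n * τ) * ‖x - y‖)
    (hrec : ∀ n, u (n + 1) = g (n + 1) (u n) - (lam (n + 1) * μ) • F (g (n + 1) (u n)))
    (hlam : ∀ n, lam n ∈ Set.Ioc 0 1) (hlam0 : Tendsto lam atTop (𝓝 0))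
    (hdiv : Tendsto (fun n => ∑ i ∈ Icc 1 n, lam i) atTop atTop)
    (hsum : Summable fun n => |lam n - lam (n + N)|) (hτ : τ ∈ Set.Ioc 0 1) (hμ : 0 < μ) :
    Tendsto u atTop (𝓝 p) := by
  set R := max ‖u 0 - p‖ (μ * ‖F p‖ / τ)
  have hR := hsdm_norm_sub_le hg hstep hrec hlam hτ hμ hgp
  have hC : ∀ n, ‖u n‖ ≤ ‖p‖ + R := fun n =>
    (norm_le_norm_add_norm_sub' _ p).trans (add_le_add_right (hR n) _)
  have hM : ∀ n, ‖F (g (n + 1) (u n))‖ ≤ ‖F p‖ + κ * R := fun n => by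
    have h := (hFlip (g (n + 1) (u n)) p).trans (mul_le_mul_of_nonneg_left
      (((hgp (n + 1)) ▸ hg (n + 1) (u n) p).trans (hR n)) hκ)
    linarith [norm_le_norm_add_norm_sub' (F (g (n + 1) (u n))) (F p)]
  have hd := hsdm_tendsto_norm_add_sub hg hgN hstep hrec hlam hτ hμ hdiv hsum hM
  have hreg := hsdm_tendsto_norm_sub_blockComp hg hrec hlam hlam0 hμ hM hd
  exact hsdm_tendsto_of_eventually_inner_le hg hstep hrec hlam hτ hμ hgp hdiv fun ε hε =>
    eventually_inner_sub_le hC (mem_of_tendsto_norm_sub_blockComp hN hg hgN hS hC hreg) hp hε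

end HSDM

theorem cyc_mem_Icc {N : ℕ} (hN : 0 < N) (m : ℕ) : cyc N m ∈ Icc 1 N := by
  have := Nat.mod_lt m hN
  unfold cyc
  split <;> (rw [mem_Icc]; omega)

theorem periodic_cyc (N : ℕ) : Periodic (cyc N) N := fun m => by
  simp only [cyc, Nat.add_mod_right]

theorem hsdm_family_convergence_general
    {H : Type*} [NormedAddCommGroup H] [InnerProductSpace ℝ H] [CompleteSpace H]
    (N : ℕ) (hN : 1 ≤ N) (T : ℕ → H → H)
    (hT : ∀ i ∈ Finset.Icc 1 N, ∀ x y : H, ‖T i x - T i y‖ ≤ ‖x - y‖)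
    (S : Set H) (hSdef : S = ⋂ i ∈ Finset.Icc 1 N, {x : H | T i x = x})
    (hS : S.Nonempty)
    (hBauschke : ∀ k < N, S = {x : H | cycComp T N k x = x})
    (κ η : ℝ) (hκ : 0 < κ) (hη : 0 < η)
    (F : H → H)
    (hFlip : ∀ x y : H, ‖F x - F y‖ ≤ κ * ‖x - y‖)
    (hFmon : ∀ x y : H, η * ‖x - y‖ ^ 2 ≤ ⟪F x - F y, x - y⟫)
    (μ : ℝ) (hμ : μ ∈ Set.Ioo (0 : ℝ) (2 * η / κ ^ 2))
    (lam : ℕ → ℝ) (hlam : ∀ n, lam n ∈ Set.Ioc (0 : ℝ) 1)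
    (hlam0 : Filter.Tendsto lam Filter.atTop (nhds 0))
    (hdiv : Filter.Tendsto (fun n => ∑ i ∈ Finset.Icc 1 n, lam i) Filter.atTop Filter.atTop)
    (hsum : Summable (fun n => |lam n - lam (n + N)|))
    (u : ℕ → H)
    (hrec : ∀ n, u (n + 1) =
      T (cyc N (n + 1)) (u n) - (lam (n + 1) * μ) • F (T (cyc N (n + 1)) (u n))) :
    ∃ ustar : H,
      (ustar ∈ S ∧ ∀ v ∈ S, 0 ≤ ⟪v - ustar, F ustar⟫) ∧
      (∀ w ∈ S, (∀ v ∈ S, 0 ≤ ⟪v - w, F w⟫) → w = ustar) ∧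
      Filter.Tendsto u Filter.atTop (nhds ustar) := by
  have hθ : 0 < μ * (2 * η - μ * κ ^ 2) := mul_pos hμ.1 <| by
    linarith [(lt_div_iff₀ (by positivity)).1 hμ.2]
  set τ := min (μ * (2 * η - μ * κ ^ 2) / 2) 1
  have hτ : τ ∈ Set.Ioc 0 1 := ⟨lt_min (by positivity) one_pos, min_le_right _ _⟩
  have hτθ : 2 * τ ≤ μ * (2 * η - μ * κ ^ 2) := by
    linarith [min_le_left (μ * (2 * η - μ * κ ^ 2) / 2) 1]
  have hstep : ∀ l ∈ Set.Icc (0 : ℝ) 1, ∀ x y : H,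
      ‖(x - (l * μ) • F x) - (y - (l * μ) • F y)‖ ≤ (1 - l * τ) * ‖x - y‖ := fun l hl =>
    norm_sub_smul_sub_sub_smul_le hFlip hFmon hμ.1.le hτθ hτ.2 hl.1 hl.2
  have hg : ∀ m x y, ‖T (cyc N m) x - T (cyc N m) y‖ ≤ ‖x - y‖ := fun m =>
    hT _ (cyc_mem_Icc hN m)
  have hSc : IsClosed S := hSdef ▸ isClosed_biInter fun i hi => isClosed_fixedPoints
    (LipschitzWith.mk_one fun x y => by simpa only [dist_eq_norm] using hT i hi x y).continuous
  have hSconv : Convex ℝ S := hSdef ▸ convex_iInter₂ fun i hi => convex_fixedPoints (hT i hi)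
  obtain ⟨p, hpS, hp⟩ := exists_forall_inner_nonneg_of_contraction hSc hSconv hS hμ.1
    (by linarith [hτ.1] : 1 - 1 * τ < 1) (by simpa using hstep 1 ⟨zero_le_one, le_rfl⟩)
  refine ⟨p, ⟨hpS, hp⟩, fun w hw hwS => eq_of_forall_inner_nonneg hη hFmon hpS hp hw hwS, ?_⟩
  have hgp : ∀ m, T (cyc N m) p = p := fun m =>
    Set.mem_iInter₂.1 (hSdef ▸ hpS) _ (cyc_mem_Icc hN m)
  exact hsdm_tendsto hN hg (fun m => by rw [periodic_cyc]) hgp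
    (fun k hk z hz => (hBauschke k hk).symm ▸ hz) hp hκ.le hFlip
    (fun n => hstep _ ⟨(hlam n).1.le, (hlam n).2⟩) hrec hlam hlam0 hdiv hsum hτ hμ.1

/-- Yamada's theorem (finite family of nonexpansive mappings): the hybrid steepest descent
method converges strongly to the unique solution of VIP(F, ⋂ Fix Tᵢ). -/
theorem hsdm_family_convergence
    {H : Type*} [NormedAddCommGroup H] [InnerProductSpace ℝ H] [CompleteSpace H]
    (N : ℕ) (hN : 1 ≤ N) (T : ℕ → H → H)
    (hT : ∀ i ∈ Finset.Icc 1 N, ∀ x y : H, ‖T i x - T i y‖ ≤ ‖x - y‖)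
    (S : Set H) (hSdef : S = ⋂ i ∈ Finset.Icc 1 N, {x : H | T i x = x})
    (hS : S.Nonempty)
    (hBauschke : ∀ k < N, S = {x : H | cycComp T N k x = x})
    (κ η : ℝ) (hκ : 0 < κ) (hη : 0 < η)
    (F : H → H)
    (hFlip : ∀ x y : H, ‖F x - F y‖ ≤ κ * ‖x - y‖)
    (hFmon : ∀ x y : H, η * ‖x - y‖ ^ 2 ≤ ⟪F x - F y, x - y⟫)
    (μ : ℝ) (hμ : μ ∈ Set.Ioo (0 : ℝ) (2 * η / κ ^ 2))
    (lam : ℕ → ℝ) (hlam : ∀ n, lam n ∈ Set.Ioc (0 : ℝ) 1)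
    (hlam0 : Filter.Tendsto lam Filter.atTop (nhds 0))
    (hdiv : Filter.Tendsto (fun n => ∑ i ∈ Finset.Icc 1 n, lam i) Filter.atTop Filter.atTop)
    (hsum : Summable (fun n => |lam n - lam (n + N)|))
    (u₀ : H) (u : ℕ → H) (hu0 : u 0 = u₀)
    (hrec : ∀ n, u (n + 1) =
      T (cyc N (n + 1)) (u n) - (lam (n + 1) * μ) • F (T (cyc N (n + 1)) (u n))) :
    ∃ ustar : H,
      (ustar ∈ S ∧ ∀ v ∈ S, 0 ≤ ⟪v - ustar, F ustar⟫) ∧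
      (∀ w ∈ S, (∀ v ∈ S, 0 ≤ ⟪v - w, F w⟫) → w = ustar) ∧
      Filter.Tendsto u Filter.atTop (nhds ustar) :=
  hsdm_family_convergence_general N hN T hT S hSdef hS hBauschke κ η hκ hη F hFlip hFmon μ hμ lam
    hlam hlam0 hdiv hsum u hrec
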